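/- Monotonicity under spanning subgraphs fails for κ^g when g ≥ 1: there exist a connected graph G and a connected spanning subgraph H of G such that both admit g-good-neighbor cuts and κ^g(H) > κ^g(G). (In contrast, for g = 0, if H is a spanning subgraph of a connected graph G and both are connected non-complete, then κ^0(H) ≤ κ^0(G).) -/

import Mathlib

open SimpleGraph

/-- `F` is a g-good-neighbor cut of `G`: removing `F` disconnects `G`
and every vertex outside `F` has at least `g` neighbors outside `F`. -/
def IsGNCut {V : Type*} [Fintype V] (G : SimpleGraph V) (g : ℕ) (F : Finset V) : Prop :=
  ¬ (G.induce ((↑F : Set V)ᶜ)).Preconnected ∧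
    ∀ v : V, v ∉ F → g ≤ (G.neighborSet v \ (↑F : Set V)).ncard

/-- The g-good-neighbor connectivity `κ^g(G)`: minimum size of a g-good-neighbor cut. -/
noncomputable def gnConn {V : Type*} [Fintype V] (G : SimpleGraph V) (g : ℕ) : ℕ :=
  sInf {m | ∃ F : Finset V, IsGNCut G g F ∧ F.card = m}

/-- Classical vertex connectivity (as minimum size of a vertex cut). -/
noncomputable def vConn {V : Type*} [Fintype V] (G : SimpleGraph V) : ℕ :=
  sInf {m | ∃ F : Finset V, ¬ (G.induce ((↑F : Set V)ᶜ)).Preconnected ∧ F.card = m}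

/-!
Let `G` consist of a clique `A` on `{0, …, g+1}` and a clique `B` on `{g+2, …, 2g+4}`, joined by
the edges `0 – (g+2)` and `0 – (g+3)`, and let `H` be `G` minus the edge `g – (g+1)` of `A`.
In `G` the vertex `0` alone is a `g`-good-neighbor cut: `A - 0` and `B` each keep degree at least
`g`. In `H`, removing `0` leaves `g+1` with only `g - 1` neighbors, and removing any other single
vertex leaves everything within distance two of `0`; hence `κ^g(H) ≥ 2`, while `{g+2, g+3}` is a
cut. For `g = 0` good-neighbor cuts are plain vertex cuts, a vertex cut of `G` is one of every
spanning subgraph, and a non-complete `G` has one.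
-/

namespace SimpleGraph

variable {V : Type*} {G : SimpleGraph V}

theorem not_preconnected_induce_compl_of_separates {F A : Set V} {u w : V}
    (hu : u ∈ A) (huF : u ∉ F) (hw : w ∉ A) (hwF : w ∉ F)
    (hA : ∀ x y, G.Adj x y → x ∈ A → x ∉ F → y ∉ F → y ∈ A) :
    ¬ (G.induce Fᶜ).Preconnected := by
  intro hpre
  obtain ⟨p⟩ := hpre ⟨u, huF⟩ ⟨w, hwF⟩
  suffices ∀ {x y : ↥Fᶜ}, (G.induce Fᶜ).Walk x y → x.1 ∈ A → y.1 ∈ A from hw (this p hu)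
  intro x y q
  induction q with
  | nil => exact id
  | @cons x y _ h _ ih => exact fun hx => ih (hA _ _ h hx x.2 y.2)

theorem preconnected_of_forall_eq_or_adj_or_adj_adj {c : V}
    (h : ∀ v, v = c ∨ G.Adj v c ∨ ∃ w, G.Adj v w ∧ G.Adj w c) : G.Preconnected := by
  have hc : ∀ v, G.Reachable v c := fun v => by
    rcases h v with rfl | hvc | ⟨w, hvw, hwc⟩
    · rfl
    · exact hvc.reachable
    · exact hvw.reachable.trans hwc.reachable
  exact fun u v => (hc u).trans (hc v).symm

theorem IsClique.card_sub_one_le_ncard_neighborSet_sdiff [Finite V] {K : Finset V} {F : Set V}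
    {v : V} (hK : G.IsClique (K : Set V)) (hv : v ∈ K) (hKF : ∀ x ∈ K, x ∉ F) :
    K.card - 1 ≤ (G.neighborSet v \ F).ncard := by
  classical
  rw [← Finset.card_erase_of_mem hv, ← Set.ncard_coe_finset]
  refine Set.ncard_le_ncard (fun x hx => ⟨?_, ?_⟩) (Set.toFinite _)
  · obtain ⟨hxv, hxK⟩ := Finset.mem_erase.mp hx
    exact hK hv hxK (Ne.symm hxv)
  · exact hKF x (Finset.mem_of_mem_erase hx)

end SimpleGraph

section GoodNeighborCut

variable {V : Type*} [Fintype V] {G H : SimpleGraph V} {g : ℕ}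

theorem gnConn_le_card {F : Finset V} (hF : IsGNCut G g F) : gnConn G g ≤ F.card :=
  Nat.sInf_le ⟨F, hF, rfl⟩

theorem le_gnConn {k : ℕ} (hcut : ∃ F, IsGNCut G g F) (hk : ∀ F, IsGNCut G g F → k ≤ F.card) :
    k ≤ gnConn G g := by
  obtain ⟨F, hF⟩ := hcut
  refine le_csInf ⟨_, F, hF, rfl⟩ ?_
  rintro _ ⟨F, hF, rfl⟩
  exact hk F hF

theorem isGNCut_zero_iff {F : Finset V} :
    IsGNCut G 0 F ↔ ¬ (G.induce ((F : Set V)ᶜ)).Preconnected := by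
  simp [IsGNCut]

theorem IsGNCut.zero_of_le (hle : H ≤ G) {F : Finset V} (hF : IsGNCut G 0 F) : IsGNCut H 0 F :=
  isGNCut_zero_iff.mpr fun hH => isGNCut_zero_iff.mp hF (hH.mono fun _ _ h => hle h)

theorem exists_isGNCut_zero_of_ne_top (hG : G ≠ ⊤) : ∃ F, IsGNCut G 0 F := by
  classical
  obtain ⟨u, v, huv, hnadj⟩ := ne_top_iff_exists_not_adj.mp hG
  refine ⟨Finset.univ \ {u, v}, isGNCut_zero_iff.mpr ?_⟩
  refine not_preconnected_induce_compl_of_separates (A := {u}) (w := v) rfl (by simp) huv.symm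
    (by simp) ?_
  rintro x y hxy rfl - hy
  simp only [Finset.coe_sdiff, Finset.coe_univ, Set.mem_sdiff, Set.mem_univ, true_and, not_not,
    Finset.coe_insert, Finset.coe_singleton, Set.mem_insert_iff, Set.mem_singleton_iff] at hy
  rcases hy with rfl | rfl
  · exact (hxy.ne rfl).elim
  · exact (hnadj hxy).elim

theorem gnConn_zero_mono (hle : H ≤ G) (hG : G ≠ ⊤) : gnConn H 0 ≤ gnConn G 0 := by
  obtain ⟨F, hF, hcard⟩ := Nat.sInf_mem (s := {m | ∃ F, IsGNCut G 0 F ∧ F.card = m})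
    (by obtain ⟨F, hF⟩ := exists_isGNCut_zero_of_ne_top hG; exact ⟨_, F, hF, rfl⟩)
  exact (gnConn_le_card (hF.zero_of_le hle)).trans_eq hcard

end GoodNeighborCut

section TwoCliques

variable (g : ℕ)

def twoCliques : SimpleGraph (Fin (2 * g + 5)) :=
  fromRel fun x y => (x.val ≤ g + 1 ∧ y.val ≤ g + 1) ∨ (g + 2 ≤ x.val ∧ g + 2 ≤ y.val) ∨
    (x.val = 0 ∧ (y.val = g + 2 ∨ y.val = g + 3))

def twoCliquesMinusEdge : SimpleGraph (Fin (2 * g + 5)) :=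
  (twoCliques g).deleteEdges {s(⟨g, by omega⟩, ⟨g + 1, by omega⟩)}

def twoCliquesSep : Finset (Fin (2 * g + 5)) :=
  {⟨g + 2, by omega⟩, ⟨g + 3, by omega⟩}

variable {g}

theorem twoCliquesMinusEdge_adj {x y : Fin (2 * g + 5)} :
    (twoCliquesMinusEdge g).Adj x y ↔
      (twoCliques g).Adj x y ∧ ¬ (x.val = g ∧ y.val = g + 1 ∨ x.val = g + 1 ∧ y.val = g) := by
  simp [twoCliquesMinusEdge, Fin.ext_iff]

theorem twoCliquesMinusEdge_le : twoCliquesMinusEdge g ≤ twoCliques g :=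
  deleteEdges_le _

theorem not_preconnected_induce_twoCliques :
    ¬ ((twoCliques g).induce ((({0} : Finset (Fin (2 * g + 5))) : Set _)ᶜ)).Preconnected := by
  refine not_preconnected_induce_compl_of_separates (A := {x | x.val ≤ g + 1})
    (u := ⟨1, by omega⟩) (w := ⟨g + 2, by omega⟩) (by simp) (by simp)
    (by simp) (by simp [Fin.ext_iff]) ?_
  intro x y hxy hx hx0 hy0
  simp only [Finset.coe_singleton, Set.mem_singleton_iff, Fin.ext_iff, Fin.val_zero] at hx0 hy0
  simp only [twoCliques, fromRel_adj, Set.mem_ofPred_eq] at hxy hx ⊢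
  omega

theorem le_ncard_neighborSet_sdiff_twoCliques {v : Fin (2 * g + 5)} (hv : v ≠ 0) :
    g ≤ ((twoCliques g).neighborSet v \ (({0} : Finset (Fin (2 * g + 5))) : Set _)).ncard := by
  rw [Ne, Fin.ext_iff, Fin.val_zero] at hv
  rcases le_or_gt v.val (g + 1) with hA | hB
  · refine le_trans ?_ (IsClique.card_sub_one_le_ncard_neighborSet_sdiff
      (K := Finset.Icc ⟨1, by omega⟩ ⟨g + 1, by omega⟩) ?_ ?_ ?_)
    · simp [Fin.card_Icc]
    · intro x hx y hy hxy
      simp only [Finset.coe_Icc, Set.mem_Icc, Fin.le_iff_val_le_val] at hx hy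
      simp only [twoCliques, fromRel_adj]
      omega
    · simp only [Finset.mem_Icc, Fin.le_iff_val_le_val]
      omega
    · intro x hx
      simp only [Finset.mem_Icc, Fin.le_iff_val_le_val] at hx
      simp only [Finset.coe_singleton, Set.mem_singleton_iff, Fin.ext_iff, Fin.val_zero]
      omega
  · refine le_trans ?_ (IsClique.card_sub_one_le_ncard_neighborSet_sdiff
      (K := Finset.Ici ⟨g + 2, by omega⟩) ?_ ?_ ?_)
    · simp only [Fin.card_Ici]
      omega
    · intro x hx y hy hxy
      simp only [Finset.coe_Ici, Set.mem_Ici, Fin.le_iff_val_le_val] at hx hy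
      simp only [twoCliques, fromRel_adj]
      omega
    · simp only [Finset.mem_Ici, Fin.le_iff_val_le_val]
      omega
    · intro x hx
      simp only [Finset.mem_Ici, Fin.le_iff_val_le_val] at hx
      simp only [Finset.coe_singleton, Set.mem_singleton_iff, Fin.ext_iff, Fin.val_zero]
      omega

theorem isGNCut_twoCliques : IsGNCut (twoCliques g) g {0} :=
  ⟨not_preconnected_induce_twoCliques, fun _ hv =>
    le_ncard_neighborSet_sdiff_twoCliques (Finset.notMem_singleton.mp hv)⟩

theorem mem_twoCliquesSep {x : Fin (2 * g + 5)} :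
    x ∈ twoCliquesSep g ↔ x.val = g + 2 ∨ x.val = g + 3 := by
  simp [twoCliquesSep, Fin.ext_iff]

theorem not_preconnected_induce_twoCliquesMinusEdge :
    ¬ ((twoCliquesMinusEdge g).induce (twoCliquesSep g : Set (Fin (2 * g + 5)))ᶜ).Preconnected := by
  refine not_preconnected_induce_compl_of_separates (A := {x | x.val ≤ g + 1})
    (u := 0) (w := ⟨g + 4, by omega⟩) (by simp) (by simp [mem_twoCliquesSep])
    (by simp) (by simp [mem_twoCliquesSep]) ?_
  intro x y hxy hx hxF hyF
  simp only [Finset.mem_coe, mem_twoCliquesSep] at hxF hyF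
  simp only [twoCliquesMinusEdge_adj, twoCliques, fromRel_adj, Set.mem_ofPred_eq] at hxy hx ⊢
  omega

theorem le_ncard_neighborSet_sdiff_twoCliquesMinusEdge {v : Fin (2 * g + 5)}
    (hv : v ∉ twoCliquesSep g) :
    g ≤ ((twoCliquesMinusEdge g).neighborSet v \ (twoCliquesSep g : Set _)).ncard := by
  rw [mem_twoCliquesSep] at hv
  rcases le_or_gt v.val (g + 1) with hA | hB
  · -- Dropping from `A` an endpoint of the deleted edge other than `v` leaves a clique of `H`.
    obtain ⟨u, hu, huv⟩ : ∃ u : Fin (2 * g + 5), (u.val = g ∨ u.val = g + 1) ∧ u.val ≠ v.val := by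
      by_cases hvg : v.val = g
      · exact ⟨⟨g + 1, by omega⟩, by simp, by simp [hvg]⟩
      · exact ⟨⟨g, by omega⟩, by simp, by simp [Ne.symm hvg]⟩
    refine le_trans ?_ (IsClique.card_sub_one_le_ncard_neighborSet_sdiff
      (K := (Finset.Iic ⟨g + 1, by omega⟩).erase u) ?_ ?_ ?_)
    · rw [Finset.card_erase_of_mem (by simp [Fin.le_iff_val_le_val]; omega), Fin.card_Iic]
      simp
    · intro x hx y hy hxy
      simp only [Finset.coe_erase, Finset.coe_Iic, Set.mem_sdiff, Set.mem_Iic,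
        Set.mem_singleton_iff, Fin.le_iff_val_le_val, Fin.ext_iff] at hx hy
      simp only [twoCliquesMinusEdge_adj, twoCliques, fromRel_adj]
      omega
    · simp only [Finset.mem_erase, Finset.mem_Iic, Fin.le_iff_val_le_val, ne_eq, Fin.ext_iff]
      omega
    · intro x hx
      simp only [Finset.mem_erase, Finset.mem_Iic, Fin.le_iff_val_le_val] at hx
      simp only [Finset.mem_coe, mem_twoCliquesSep]
      omega
  · refine le_trans ?_ (IsClique.card_sub_one_le_ncard_neighborSet_sdiff
      (K := Finset.Ici ⟨g + 4, by omega⟩) ?_ ?_ ?_)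
    · simp only [Fin.card_Ici]
      omega
    · intro x hx y hy hxy
      simp only [Finset.coe_Ici, Set.mem_Ici, Fin.le_iff_val_le_val] at hx hy
      simp only [twoCliquesMinusEdge_adj, twoCliques, fromRel_adj]
      omega
    · simp only [Finset.mem_Ici, Fin.le_iff_val_le_val]
      omega
    · intro x hx
      simp only [Finset.mem_Ici, Fin.le_iff_val_le_val] at hx
      simp only [Finset.mem_coe, mem_twoCliquesSep]
      omega

theorem isGNCut_twoCliquesMinusEdge : IsGNCut (twoCliquesMinusEdge g) g (twoCliquesSep g) :=
  ⟨not_preconnected_induce_twoCliquesMinusEdge,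
    fun _ hv => le_ncard_neighborSet_sdiff_twoCliquesMinusEdge hv⟩

theorem preconnected_induce_twoCliquesMinusEdge (hg : 1 ≤ g) {F : Set (Fin (2 * g + 5))}
    (h0 : 0 ∉ F) (hF : ⟨g + 2, by omega⟩ ∉ F ∨ ⟨g + 3, by omega⟩ ∉ F) :
    ((twoCliquesMinusEdge g).induce Fᶜ).Preconnected := by
  refine preconnected_of_forall_eq_or_adj_or_adj_adj (c := ⟨0, h0⟩) fun ⟨v, hv⟩ => ?_
  simp only [induce_adj, twoCliquesMinusEdge_adj, twoCliques, fromRel_adj, Subtype.exists,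
    Set.mem_compl_iff, Subtype.mk.injEq, Fin.ext_iff, Fin.val_zero, ne_eq, true_and]
  by_cases hv0 : v.val = 0
  · exact Or.inl hv0
  by_cases hA : v.val ≤ g + 3
  · right; left
    omega
  right; right
  rcases hF with h | h
  · exact ⟨⟨g + 2, by omega⟩, h, by dsimp only; omega⟩
  · exact ⟨⟨g + 3, by omega⟩, h, by dsimp only; omega⟩

theorem connected_twoCliquesMinusEdge (hg : 1 ≤ g) : (twoCliquesMinusEdge g).Connected := by
  have := preconnected_induce_twoCliquesMinusEdge hg (F := ∅) (by simp) (by simp)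
  rw [Set.compl_empty, (induceUnivIso _).preconnected_iff] at this
  exact ⟨this⟩

theorem ncard_neighborSet_sdiff_twoCliquesMinusEdge_lt (hg : 1 ≤ g) {F : Set (Fin (2 * g + 5))}
    (h0 : 0 ∈ F) : ((twoCliquesMinusEdge g).neighborSet ⟨g + 1, by omega⟩ \ F).ncard < g := by
  refine (Set.ncard_le_ncard (t := Finset.Ioo (0 : Fin (2 * g + 5)) ⟨g, by omega⟩) ?_).trans_lt ?_
  · rintro x ⟨hx, hxF⟩
    have hx0 : x ≠ 0 := fun h => hxF (h ▸ h0)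
    simp only [mem_neighborSet, twoCliquesMinusEdge_adj, twoCliques, fromRel_adj, ne_eq,
      Fin.ext_iff, true_and] at hx
    rw [Ne, Fin.ext_iff, Fin.val_zero] at hx0
    simp only [Finset.coe_Ioo, Set.mem_Ioo, Fin.lt_def, Fin.val_zero]
    omega
  · rw [Set.ncard_coe_finset, Fin.card_Ioo]
    simp only [Fin.val_zero]
    omega

theorem two_le_gnConn_twoCliquesMinusEdge (hg : 1 ≤ g) : 2 ≤ gnConn (twoCliquesMinusEdge g) g := by
  refine le_gnConn ⟨_, isGNCut_twoCliquesMinusEdge⟩ fun F hF => ?_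
  by_contra! hcard
  have hle : ∀ a ∈ F, ∀ b ∈ F, a = b := Finset.card_le_one.mp (by omega)
  by_cases h0 : (0 : Fin (2 * g + 5)) ∈ F
  · have hv : (⟨g + 1, by omega⟩ : Fin (2 * g + 5)) ∉ F := fun h => by
      simpa [Fin.ext_iff] using hle _ h _ h0
    exact (hF.2 _ hv).not_gt (ncard_neighborSet_sdiff_twoCliquesMinusEdge_lt hg h0)
  · refine hF.1 (preconnected_induce_twoCliquesMinusEdge hg h0 ?_)
    by_contra! h
    simpa [Fin.ext_iff] using hle _ h.1 _ h.2

end TwoCliques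

/-- Monotonicity under spanning subgraphs fails for κ^g when g ≥ 1, while for
g = 0 it holds for connected non-complete spanning subgraphs. -/
theorem stmt19 :
    (∀ g : ℕ, 1 ≤ g → ∃ (m : ℕ) (G H : SimpleGraph (Fin m)),
      H ≤ G ∧ G.Connected ∧ H.Connected ∧
      (∃ F : Finset (Fin m), IsGNCut G g F) ∧
      (∃ F : Finset (Fin m), IsGNCut H g F) ∧
      gnConn G g < gnConn H g) ∧
    (∀ (m : ℕ) (G H : SimpleGraph (Fin m)), H ≤ G → G.Connected → H.Connected →
      G ≠ ⊤ → H ≠ ⊤ → gnConn H 0 ≤ gnConn G 0) := by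
  refine ⟨fun g hg => ?_, fun _ _ _ hle _ _ hG _ => gnConn_zero_mono hle hG⟩
  have hH := connected_twoCliquesMinusEdge hg
  refine ⟨2 * g + 5, twoCliques g, twoCliquesMinusEdge g, twoCliquesMinusEdge_le,
    hH.mono twoCliquesMinusEdge_le, hH, ⟨_, isGNCut_twoCliques⟩,
    ⟨_, isGNCut_twoCliquesMinusEdge⟩, ?_⟩
  calc gnConn (twoCliques g) g ≤ 1 :=
        (gnConn_le_card isGNCut_twoCliques).trans_eq (Finset.card_singleton _)
    _ < 2 := one_lt_two
    _ ≤ gnConn (twoCliquesMinusEdge g) g := two_le_gnConn_twoCliquesMinusEdge hg
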